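/- For the standard hypergraph potential with ℓ∞ hyperedge norms, one step of the discrete-time heat diffusion does not increase the sup norm: ‖x − D⁻¹L^D(x)‖_∞ ≤ ‖x‖_∞ for every x ∈ ℝ^V. -/

import Mathlib

open Finset

/-- `min_{u ∈ ℝ} ‖x_A − u·1_A‖_∞` for a hyperedge `A`. -/
noncomputable def linfShift {V : Type*} (A : Finset V) (x : V → ℝ) : ℝ :=
  sInf (Set.range fun u : ℝ => sSup ((fun i => |x i - u|) '' (A : Set V)))

/-- The standard hypergraph potential
`U∞(x) = (1/2) Σ_h w_h (min_u ‖x_h − u·1_h‖_∞)²`. -/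
noncomputable def UInf {V E : Type*} [Fintype E] (edge : E → Finset V)
    (w : E → ℝ) (x : V → ℝ) : ℝ :=
  (1 / 2) * ∑ e, w e * (linfShift (edge e) x) ^ 2

/-- The subdifferential of `f` at `x` (Euclidean inner product). -/
def subdiff {V : Type*} [Fintype V] (f : (V → ℝ) → ℝ) (x : V → ℝ) :
    Set (V → ℝ) :=
  {z | ∀ w, f x + ∑ i, (w i - x i) * z i ≤ f w}

/-- The degree `deg(i) = Σ_{h ∋ i} w_h`. -/
noncomputable def hdeg {V E : Type*} [Fintype E] [DecidableEq V]
    (edge : E → Finset V) (w : E → ℝ) (i : V) : ℝ :=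
  ∑ e, if i ∈ edge e then w e else 0

lemma linfShift_le_sup' {V : Type*} (A : Finset V) (hA : A.Nonempty) (x : V → ℝ) (u : ℝ) :
    linfShift A x ≤ A.sup' hA (fun i => |x i - u|) := by
  unfold linfShift
  rw [Finset.sup'_eq_csSup_image]
  apply csInf_le
  · refine ⟨0, ?_⟩
    rintro y ⟨v, rfl⟩
    obtain ⟨j, hj⟩ := hA
    have hmem : |x j - v| ∈ (fun i => |x i - v|) '' (A : Set V) :=
      ⟨j, by simpa using hj, rfl⟩
    have hbdd : BddAbove ((fun i => |x i - v|) '' (A : Set V)) :=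
      ((A : Set V).toFinite.image _).bddAbove
    exact le_trans (abs_nonneg _) (le_csSup hbdd hmem)
  · exact ⟨u, rfl⟩

lemma le_linfShift {V : Type*} (A : Finset V) (hA : A.Nonempty) (x : V → ℝ) :
    (A.sup' hA x - A.inf' hA x) / 2 ≤ linfShift A x := by
  unfold linfShift
  apply le_csInf (Set.range_nonempty _)
  rintro b ⟨u, rfl⟩
  obtain ⟨ja, hja, hja2⟩ := Finset.exists_mem_eq_sup' hA x
  obtain ⟨jm, hjm, hjm2⟩ := Finset.exists_mem_eq_inf' hA x
  have hbdd : BddAbove ((fun i => |x i - u|) '' (A : Set V)) :=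
    ((A : Set V).toFinite.image _).bddAbove
  have h1 : |x ja - u| ≤ sSup ((fun i => |x i - u|) '' (A : Set V)) :=
    le_csSup hbdd ⟨ja, by simpa using hja, rfl⟩
  have h2 : |x jm - u| ≤ sSup ((fun i => |x i - u|) '' (A : Set V)) :=
    le_csSup hbdd ⟨jm, by simpa using hjm, rfl⟩
  have h3 : x ja - u ≤ |x ja - u| := le_abs_self _
  have h4 : u - x jm ≤ |x jm - u| := by
    rw [abs_sub_comm]; exact le_abs_self _
  rw [hja2, hjm2]
  linarith

lemma linfShift_congr {V : Type*} (A : Finset V) {x y : V → ℝ}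
    (h : ∀ j ∈ A, x j = y j) : linfShift A x = linfShift A y := by
  unfold linfShift
  have : (fun u : ℝ => sSup ((fun i => |x i - u|) '' (A : Set V)))
      = fun u : ℝ => sSup ((fun i => |y i - u|) '' (A : Set V)) := by
    funext u
    congr 1
    apply Set.image_congr
    intro j hj
    rw [h j (by simpa using hj)]
  rw [this]

lemma linfShift_neg {V : Type*} (A : Finset V) (x : V → ℝ) :
    linfShift A (fun j => -x j) = linfShift A x := by
  unfold linfShift
  have h1 : (fun u : ℝ => sSup ((fun i => |(-x i) - u|) '' (A : Set V)))
      = fun u : ℝ => sSup ((fun i => |x i - (-u)|) '' (A : Set V)) := by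
    funext u
    congr 1
    apply Set.image_congr
    intro j _
    have : -x j - u = -(x j - (-u)) := by ring
    rw [this, abs_neg]
  rw [h1]
  congr 1
  ext y
  simp only [Set.mem_range]
  constructor
  · rintro ⟨u, rfl⟩; exact ⟨-u, rfl⟩
  · rintro ⟨u, rfl⟩; exact ⟨-u, by rw [neg_neg]⟩

lemma UInf_neg {V E : Type*} [Fintype E] (edge : E → Finset V) (w : E → ℝ) (x : V → ℝ) :
    UInf edge w (fun j => -x j) = UInf edge w x := by
  unfold UInf
  congr 1
  apply Finset.sum_congr rfl
  intro e _
  rw [linfShift_neg]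

/-- Per-edge estimate: bumping coordinate `i` up by `t ≥ 0` increases the squared
radius by at most `(2(x i + M)t + t²)/4`. -/
lemma edge_sq_bound {V : Type*} [DecidableEq V] {A : Finset V} {i : V} (hi : i ∈ A)
    (x : V → ℝ) {t M : ℝ} (ht : 0 ≤ t) (hM : ∀ j, |x j| ≤ M) :
    (linfShift A (fun j => if j = i then x i + t else x j)) ^ 2
      ≤ (linfShift A x) ^ 2 + (2 * (x i + M) * t + t ^ 2) / 4 := by
  have hA : A.Nonempty := ⟨i, hi⟩
  set y : V → ℝ := fun j => if j = i then x i + t else x j with hy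
  set a := A.sup' hA x with ha
  set m := A.inf' hA x with hm
  have h1 : m ≤ x i := Finset.inf'_le _ hi
  have h2 : x i ≤ a := Finset.le_sup' _ hi
  have h3 : -M ≤ m := by
    apply Finset.le_inf'
    intro j _
    exact (abs_le.mp (hM j)).1
  have hMi : -M ≤ x i := (abs_le.mp (hM i)).1
  have hlx : (a - m) / 2 ≤ linfShift A x := le_linfShift A hA x
  have hly0 : 0 ≤ linfShift A y := by
    have hle := le_linfShift A hA y
    have hi1 : A.inf' hA y ≤ y i := Finset.inf'_le _ hi
    have hi2 : y i ≤ A.sup' hA y := Finset.le_sup' _ hi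
    linarith
  set B := max a (x i + t) with hB
  have hly : linfShift A y ≤ (B - m) / 2 := by
    refine (linfShift_le_sup' A hA y ((B + m) / 2)).trans ?_
    apply Finset.sup'_le
    intro j hj
    rw [abs_le]
    by_cases hji : j = i
    · subst hji
      have : y j = x j + t := by simp [hy]
      constructor <;>
        simp only [this] <;>
        [skip; skip] <;>
        · have := le_max_right a (x j + t); linarith
    · have hyj : y j = x j := by simp [hy, hji]
      have hj1 : m ≤ x j := Finset.inf'_le _ hj
      have hj2 : x j ≤ a := Finset.le_sup' _ hj
      have := le_max_left a (x i + t)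
      constructor <;> simp only [hyj] <;> linarith
  rcases le_total (x i + t) a with hc | hc
  · have hBa : B = a := max_eq_left hc
    rw [hBa] at hly
    nlinarith
  · have hBa : B = x i + t := max_eq_right hc
    rw [hBa] at hly
    nlinarith

/-- One-sided bound: every subgradient satisfies `z i ≤ deg i · (x i + M)`. -/
lemma one_sided {V E : Type*} [Fintype V] [Fintype E] [DecidableEq V]
    (edge : E → Finset V) (w : E → ℝ) (hw : ∀ e, 0 ≤ w e)
    (hdpos : ∀ i, 0 < hdeg edge w i)
    (x z : V → ℝ) (hz : z ∈ subdiff (UInf edge w) x)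
    (M : ℝ) (hM : ∀ j, |x j| ≤ M) (i : V) :
    z i ≤ hdeg edge w i * (x i + M) := by
  have hMi : 0 ≤ x i + M := by have := (abs_le.mp (hM i)).1; linarith
  set d := hdeg edge w i with hd
  have hdp : 0 < d := hdpos i
  -- Step 1: for every t > 0, z i ≤ d * (2*(x i + M) + t) / 8
  have step1 : ∀ t : ℝ, 0 < t → z i ≤ d * (2 * (x i + M) + t) / 8 := by
    intro t ht
    set y : V → ℝ := fun j => if j = i then x i + t else x j with hy
    have hsg := hz y
    have hsum : ∑ j, (y j - x j) * z j = t * z i := by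
      rw [Finset.sum_eq_single i]
      · simp [hy]
      · intro j _ hji; simp [hy, hji]
      · intro h; exact absurd (Finset.mem_univ i) h
    rw [hsum] at hsg
    -- bound UInf y
    have key : ∀ e, w e * (linfShift (edge e) y) ^ 2 - w e * (linfShift (edge e) x) ^ 2
        ≤ (if i ∈ edge e then w e else 0) * ((2 * (x i + M) * t + t ^ 2) / 4) := by
      intro e
      by_cases he : i ∈ edge e
      · rw [if_pos he]
        have hb := edge_sq_bound he x (le_of_lt ht) hM
        have := hw e
        nlinarith
      · rw [if_neg he]
        have hcong : linfShift (edge e) y = linfShift (edge e) x := by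
          apply linfShift_congr
          intro j hj
          have : j ≠ i := fun h => he (h ▸ hj)
          simp [hy, this]
        rw [hcong]
        simp
    have hsum2 : ∑ e, (w e * (linfShift (edge e) y) ^ 2 - w e * (linfShift (edge e) x) ^ 2)
        ≤ d * ((2 * (x i + M) * t + t ^ 2) / 4) := by
      rw [hd, hdeg, Finset.sum_mul]
      exact Finset.sum_le_sum fun e _ => key e
    have hsub : ∑ e, (w e * (linfShift (edge e) y) ^ 2 - w e * (linfShift (edge e) x) ^ 2)
        = (∑ e, w e * (linfShift (edge e) y) ^ 2) - ∑ e, w e * (linfShift (edge e) x) ^ 2 :=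
      Finset.sum_sub_distrib _ _
    have hU : UInf edge w y ≤ UInf edge w x + d * ((2 * (x i + M) * t + t ^ 2) / 8) := by
      unfold UInf
      rw [hsub] at hsum2
      linarith
    have hq : t * z i ≤ d * ((2 * (x i + M) * t + t ^ 2) / 8) := by linarith
    have h8 : t * (d * (2 * (x i + M) + t) / 8) = d * ((2 * (x i + M) * t + t ^ 2) / 8) := by
      ring
    rw [← mul_le_mul_iff_right₀ ht, h8]
    exact hq
  -- Step 2: let t → 0
  have step2 : z i ≤ d * (x i + M) / 4 := by
    apply le_of_forall_pos_le_add
    intro ε hε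
    have ht : 0 < 8 * ε / d := by positivity
    have := step1 (8 * ε / d) ht
    have hexp : d * (2 * (x i + M) + 8 * ε / d) / 8 = d * (x i + M) / 4 + ε := by
      field_simp
      ring
    rw [hexp] at this
    exact this
  nlinarith

/-- one step of the discrete-time heat diffusion for the
standard ℓ∞ potential does not increase the sup norm:
`‖x − D⁻¹L^D(x)‖_∞ ≤ ‖x‖_∞`, where `L^D(x)` is the minimum
`‖·‖_{D⁻¹}`-norm subgradient of `U∞` at `x`. -/
theorem stmt13 {V E : Type*} [Fintype V] [Fintype E] [DecidableEq V]
    [Nonempty V]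
    (edge : E → Finset V) (w : E → ℝ)
    (hw : ∀ e, 0 ≤ w e)
    (hdpos : ∀ i, 0 < hdeg edge w i)
    (x z : V → ℝ)
    (hzmem : z ∈ subdiff (UInf edge w) x)
    (hzmin : ∀ z' ∈ subdiff (UInf edge w) x,
      ∑ i, (z i) ^ 2 / hdeg edge w i ≤ ∑ i, (z' i) ^ 2 / hdeg edge w i) :
    ∀ i, |x i - z i / hdeg edge w i| ≤ ⨆ j, |x j| := by
  intro i
  have hM : ∀ j, |x j| ≤ ⨆ j, |x j| := fun j =>
    le_ciSup (Set.Finite.bddAbove (Set.finite_range fun j => |x j|)) j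
  set M : ℝ := ⨆ j, |x j| with hMdef
  set d := hdeg edge w i with hd
  have hdp : 0 < d := hdpos i
  have hub : z i ≤ d * (x i + M) := one_sided edge w hw hdpos x z hzmem M hM i
  -- negation trick for the lower bound
  have hzneg : (fun j => -z j) ∈ subdiff (UInf edge w) (fun j => -x j) := by
    intro y
    have h := hzmem (fun j => -y j)
    rw [UInf_neg edge w y] at h
    show UInf edge w (fun j => -x j) + ∑ j, (y j - (fun j => -x j) j) * (fun j => -z j) j
        ≤ UInf edge w y
    rw [UInf_neg edge w x]
    have hs : ∑ j, (y j - (fun j => -x j) j) * (fun j => -z j) j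
        = ∑ j, ((fun j => -y j) j - x j) * z j := by
      apply Finset.sum_congr rfl
      intro j _
      simp only []
      ring
    rw [hs]
    exact h
  have hlb : -z i ≤ d * (-x i + M) := by
    have hM' : ∀ j, |(fun j => -x j) j| ≤ M := fun j => by
      simpa [abs_neg] using hM j
    exact one_sided edge w hw hdpos (fun j => -x j) (fun j => -z j) hzneg M hM' i
  rw [abs_le]
  have h1 : z i / d ≤ x i + M := by
    rw [div_le_iff₀ hdp]
    linarith [hub]
  have h2 : -(x i + M) + 2 * x i ≤ z i / d ∨ True := Or.inr trivial
  have h3 : x i - M ≤ z i / d := by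
    rw [le_div_iff₀ hdp]
    nlinarith [hlb]
  constructor <;> linarith
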